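/- arXiv:0910.5264 — 2 statements merged into one kernel-verified Lean document; each statement's English description precedes it below -/
import Mathlib

section
/- Let H ∈ {0,1}, π a Π-valued belief, consistency as above, and let Y be a new observation with P(Y=y|H=h, π) = f_h(y) and updated belief π' = T(π,Y) where T(p,y) = p f₀(y)/(p f₀(y) + (1-p) f₁(y)) (defined when the denominator is positive). Then the pushed-forward joint law of (H, π') given by (Q²ξ)(h, q) = Σ_{π₀,y} 1[T(π₀,y)=q] f_h(y) ξ(h,π₀) also satisfies the consistency property: (Q²ξ)({0}×{q}) = q · (Q²ξ)({0,1}×{q}) whenever the latter is positive. -/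
open scoped Classical

open Finset

/-- One Bayes step: mass `x₀ + x₁` split as `p : 1 - p` between the two hypotheses, weighted by
the likelihoods `a₀, a₁`, is split as `p' : 1 - p'`. -/
theorem mul_eq_bayesUpdate_mul {p p' a₀ a₁ x₀ x₁ : ℝ} (ha₀ : 0 ≤ a₀) (ha₁ : 0 ≤ a₁)
    (hx₀ : 0 ≤ x₀) (hx₁ : 0 ≤ x₁) (hx : 0 < x₀ + x₁ → x₀ = p * (x₀ + x₁))
    (hp' : 0 < p * a₀ + (1 - p) * a₁ → p' = p * a₀ / (p * a₀ + (1 - p) * a₁)) :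
    a₀ * x₀ = p' * (a₀ * x₀ + a₁ * x₁) := by
  have h₀ : 0 ≤ a₀ * x₀ := mul_nonneg ha₀ hx₀
  have h₁ : 0 ≤ a₁ * x₁ := mul_nonneg ha₁ hx₁
  rcases (add_nonneg h₀ h₁).eq_or_lt with hzero | hpos
  · rw [← hzero, mul_zero]
    linarith
  have hs : 0 < x₀ + x₁ := by
    by_contra! hs
    nlinarith
  have hsplit : a₀ * x₀ + a₁ * x₁ = (x₀ + x₁) * (p * a₀ + (1 - p) * a₁) := by
    linear_combination (a₀ - a₁) * hx hs
  have hD : 0 < p * a₀ + (1 - p) * a₁ := pos_of_mul_pos_right (hsplit ▸ hpos) hs.le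
  rw [hsplit, hp' hD, mul_comm (x₀ + x₁), ← mul_assoc, div_mul_cancel₀ _ hD.ne']
  linear_combination a₀ * hx hs

theorem Finset.sum_eq_mul_sum_add {ι : Type*} {s : Finset ι} {u w : ι → ℝ} {c : ℝ}
    (h : ∀ i, u i = c * (u i + w i)) : ∑ i ∈ s, u i = c * (∑ i ∈ s, u i + ∑ i ∈ s, w i) := by
  rw [← sum_add_distrib, mul_sum]
  exact sum_congr rfl fun i _ => h i

theorem consistency_preserved_by_propagation_general {B 𝒴 : Type*} [Fintype B] [Fintype 𝒴]
    (v : B → ℝ)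
    (f : Fin 2 → 𝒴 → ℝ) (hfnn : ∀ h y, 0 ≤ f h y)
    (Tm : B → 𝒴 → B)
    (hTm : ∀ π₀ y, 0 < v π₀ * f 0 y + (1 - v π₀) * f 1 y →
      v (Tm π₀ y) = v π₀ * f 0 y / (v π₀ * f 0 y + (1 - v π₀) * f 1 y))
    (ξ : Fin 2 × B → ℝ) (hξnn : ∀ x, 0 ≤ ξ x)
    (hcons : ∀ π₀, 0 < ξ (0, π₀) + ξ (1, π₀) →
      ξ (0, π₀) = v π₀ * (ξ (0, π₀) + ξ (1, π₀)))
    (η : Fin 2 × B → ℝ)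
    (hη : ∀ h q, η (h, q) =
      ∑ π₀, ∑ y, (if Tm π₀ y = q then (1:ℝ) else 0) * f h y * ξ (h, π₀)) :
    ∀ q, 0 < η (0, q) + η (1, q) → η (0, q) = v q * (η (0, q) + η (1, q)) := by
  intro q _
  rw [hη 0 q, hη 1 q]
  refine sum_eq_mul_sum_add fun π₀ => sum_eq_mul_sum_add fun y => ?_
  split_ifs with hT
  · subst hT
    simp only [one_mul]
    exact mul_eq_bayesUpdate_mul (hfnn 0 y) (hfnn 1 y) (hξnn _) (hξnn _) (hcons π₀) (hTm π₀ y)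
  · simp only [zero_mul, add_zero, mul_zero]

/-- the belief-propagation transformation `Q²` of Lemma 3
preserves the posterior-consistency property of the information state.
`v π₀` is the real belief value attached to `π₀ : B`, and `Tm` is the Bayes
belief-update map on belief values. -/
theorem consistency_preserved_by_propagation {B 𝒴 : Type*} [Fintype B] [Fintype 𝒴]
    (v : B → ℝ) (hv : ∀ π₀, v π₀ ∈ Set.Icc (0:ℝ) 1)
    (f : Fin 2 → 𝒴 → ℝ) (hfnn : ∀ h y, 0 ≤ f h y) (hfs : ∀ h, ∑ y, f h y = 1)
    (Tm : B → 𝒴 → B)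
    (hTm : ∀ π₀ y, 0 < v π₀ * f 0 y + (1 - v π₀) * f 1 y →
      v (Tm π₀ y) = v π₀ * f 0 y / (v π₀ * f 0 y + (1 - v π₀) * f 1 y))
    (ξ : Fin 2 × B → ℝ) (hξnn : ∀ x, 0 ≤ ξ x) (hξsum : ∑ x, ξ x = 1)
    (hcons : ∀ π₀, 0 < ξ (0, π₀) + ξ (1, π₀) →
      ξ (0, π₀) = v π₀ * (ξ (0, π₀) + ξ (1, π₀)))
    (η : Fin 2 × B → ℝ)
    (hη : ∀ h q, η (h, q) =
      ∑ π₀, ∑ y, (if Tm π₀ y = q then (1:ℝ) else 0) * f h y * ξ (h, π₀)) :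
    ∀ q, 0 < η (0, q) + η (1, q) → η (0, q) = v q * (η (0, q) + η (1, q)) :=
  consistency_preserved_by_propagation_general v f hfnn Tm hTm ξ hξnn hcons η hη
end

section
/- Let H ∈ {0,1}, π¹ and π² be belief-valued random variables, D ∈ {0,1} an indicator, and suppose observer 2's new observation Y² satisfies P(Y²=y | H, π¹, π², D, past) = f_H(y). Let observer 2's stopping rule at time t be: continue (D'=1) iff D=1 and π²' := T(π², Y²) ∈ (α², β²); set D'=0 otherwise, in which case π²' is frozen at its stopped value. Then the joint law of (H, π¹, π²', D') is a measurable function of the joint law of (H, π¹, π², D), the thresholds (α², β²), and the likelihoods f₀, f₁ — i.e., there is a transformation Q² with ψ' = Q²(φ, γ²). -/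
/-!
Given the state `(H, π¹, π², D)`, the new observation `Y²` has law `f_H`, so the joint law of
state and observation is the law of the state composed with the kernel `f`. The updated state is
a deterministic function `observer2Step` of state and observation, so its law is the image of
that joint law and depends only on the prior law of the state, `f`, `Tm` and the thresholds.
-/

open scoped Classical
open Finset

/-- Probability of an event on a finite space with weights `P`. -/
noncomputable def Pr {Ω : Type*} [Fintype Ω] (P : Ω → ℝ) (E : Ω → Prop) : ℝ :=
  ∑ ω, if E ω then P ω else 0

/-- Conditional probability `P(E | F)`. -/
noncomputable def cPr {Ω : Type*} [Fintype Ω] (P : Ω → ℝ) (E F : Ω → Prop) : ℝ :=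
  Pr P (fun ω => E ω ∧ F ω) / Pr P F

section FiniteProbability

variable {Ω : Type*} [Fintype Ω] (P : Ω → ℝ)

lemma Pr_eq_sum_filter (E : Ω → Prop) : Pr P E = ∑ ω with E ω, P ω :=
  (sum_filter _ _).symm

lemma Pr_congr {E F : Ω → Prop} (h : ∀ ω, E ω ↔ F ω) : Pr P E = Pr P F := by
  simp only [Pr, h]

variable {P}

lemma Pr_nonneg (hP : ∀ ω, 0 ≤ P ω) (E : Ω → Prop) : 0 ≤ Pr P E := by
  rw [Pr_eq_sum_filter]
  exact sum_nonneg fun ω _ => hP ω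

lemma Pr_mono (hP : ∀ ω, 0 ≤ P ω) {E F : Ω → Prop} (h : ∀ ω, E ω → F ω) :
    Pr P E ≤ Pr P F := by
  simp only [Pr_eq_sum_filter]
  exact sum_le_sum_of_subset_of_nonneg (monotone_filter_right _ fun ω _ => h ω)
    fun ω _ _ => hP ω

lemma Pr_comp_eq_sum {β : Type*} {g : Ω → β} {T : Finset β} (hT : ∀ ω, g ω ∈ T)
    (φ : β → Prop) :
    Pr P (fun ω => φ (g ω)) = ∑ b ∈ T, if φ b then Pr P (fun ω => g ω = b) else 0 := by
  rw [Pr, ← sum_fiberwise_of_maps_to (fun ω _ => hT ω)]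
  refine sum_congr rfl fun b _ => ?_
  split_ifs with hb
  · rw [Pr_eq_sum_filter]
    exact sum_congr rfl fun ω hω => by rw [(mem_filter.1 hω).2, if_pos hb]
  · exact sum_eq_zero fun ω hω => by rw [(mem_filter.1 hω).2, if_neg hb]

lemma Pr_and_eq_mul_of_cPr (hP : ∀ ω, 0 ≤ P ω) {E F : Ω → Prop} {c : ℝ}
    (h : 0 < Pr P F → cPr P E F = c) : Pr P (fun ω => E ω ∧ F ω) = c * Pr P F := by
  rcases (Pr_nonneg hP F).lt_or_eq with hF | hF
  · rw [← h hF, cPr, div_mul_cancel₀ _ hF.ne']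
  · rw [← hF, mul_zero]
    exact le_antisymm (hF ▸ Pr_mono hP fun ω hω => hω.2) (Pr_nonneg hP _)

lemma Pr_comp_pair_eq_sum {α 𝒴 : Type*} [Fintype 𝒴] (hP : ∀ ω, 0 ≤ P ω)
    {X : Ω → α} {Y : Ω → 𝒴} {κ : α → 𝒴 → ℝ}
    (hκ : ∀ x y, 0 < Pr P (fun ω => X ω = x) →
      cPr P (fun ω => Y ω = y) (fun ω => X ω = x) = κ x y)
    {S : Finset α} (hS : ∀ ω, X ω ∈ S) (φ : α → 𝒴 → Prop) :
    Pr P (fun ω => φ (X ω) (Y ω)) =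
      ∑ x ∈ S, ∑ y, if φ x y then κ x y * Pr P (fun ω => X ω = x) else 0 := by
  rw [Pr_comp_eq_sum (g := fun ω => (X ω, Y ω)) (T := S ×ˢ univ)
    (fun ω => mem_product.2 ⟨hS ω, mem_univ _⟩) (fun p => φ p.1 p.2), sum_product]
  refine sum_congr rfl fun x _ => sum_congr rfl fun y _ => ?_
  rw [← Pr_and_eq_mul_of_cPr hP (hκ x y)]
  exact if_congr Iff.rfl (Pr_congr P fun ω => by rw [Prod.mk.injEq, and_comm]) rfl

end FiniteProbability

lemma Pr_comp_eq_of_law_eq {Ω Ω' α 𝒴 : Type*} [Fintype Ω] [Fintype Ω'] [Fintype 𝒴]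
    {P : Ω → ℝ} {P' : Ω' → ℝ} (hP : ∀ ω, 0 ≤ P ω) (hP' : ∀ ω, 0 ≤ P' ω)
    {X : Ω → α} {X' : Ω' → α} {Y : Ω → 𝒴} {Y' : Ω' → 𝒴} {κ : α → 𝒴 → ℝ}
    (hκ : ∀ x y, 0 < Pr P (fun ω => X ω = x) →
      cPr P (fun ω => Y ω = y) (fun ω => X ω = x) = κ x y)
    (hκ' : ∀ x y, 0 < Pr P' (fun ω => X' ω = x) →
      cPr P' (fun ω => Y' ω = y) (fun ω => X' ω = x) = κ x y)
    (hlaw : ∀ x, Pr P (fun ω => X ω = x) = Pr P' (fun ω => X' ω = x)) (φ : α → 𝒴 → Prop) :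
    Pr P (fun ω => φ (X ω) (Y ω)) = Pr P' (fun ω => φ (X' ω) (Y' ω)) := by
  let S := univ.image X ∪ univ.image X'
  have hX : ∀ ω, X ω ∈ S := fun ω => mem_union_left _ (mem_image_of_mem _ (mem_univ ω))
  have hX' : ∀ ω, X' ω ∈ S := fun ω => mem_union_right _ (mem_image_of_mem _ (mem_univ ω))
  rw [Pr_comp_pair_eq_sum hP hκ hX, Pr_comp_pair_eq_sum hP' hκ' hX']
  simp only [hlaw]

noncomputable def observer2Step {B1 𝒴 : Type*} (Tm : ℝ → 𝒴 → ℝ) (α β : ℝ)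
    (x : Fin 2 × B1 × ℝ × Bool) (y : 𝒴) : Fin 2 × B1 × ℝ × Bool :=
  (x.1, x.2.1, if x.2.2.2 then Tm x.2.2.1 y else x.2.2.1,
    decide (x.2.2.2 = true ∧ Tm x.2.2.1 y ∈ Set.Ioo α β))

section Observer2

variable {Ω B1 𝒴 : Type*} {H : Ω → Fin 2} {π1 : Ω → B1} {π2 : Ω → ℝ} {D : Ω → Bool}
  {Y2 : Ω → 𝒴}

lemma observer2Step_state {Tm : ℝ → 𝒴 → ℝ} {α β : ℝ} {π2' : Ω → ℝ} {D' : Ω → Bool}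
    (hπ2' : ∀ ω, π2' ω = if D ω = true then Tm (π2 ω) (Y2 ω) else π2 ω)
    (hD' : ∀ ω, D' ω = true ↔ (D ω = true ∧ Tm (π2 ω) (Y2 ω) ∈ Set.Ioo α β)) (ω : Ω) :
    observer2Step Tm α β (H ω, π1 ω, π2 ω, D ω) (Y2 ω) = (H ω, π1 ω, π2' ω, D' ω) := by
  simp only [observer2Step, hπ2' ω, Prod.mk.injEq, true_and]
  rw [Bool.eq_iff_iff, decide_eq_true_iff, hD' ω]

lemma cPr_state_eq_of_cPr [Fintype Ω] {P : Ω → ℝ} {f : Fin 2 → 𝒴 → ℝ}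
    (hci : ∀ (y : 𝒴) (h : Fin 2) (q1 : B1) (q2 : ℝ) (d : Bool),
      0 < Pr P (fun ω => H ω = h ∧ π1 ω = q1 ∧ π2 ω = q2 ∧ D ω = d) →
      cPr P (fun ω => Y2 ω = y)
        (fun ω => H ω = h ∧ π1 ω = q1 ∧ π2 ω = q2 ∧ D ω = d) = f h y)
    (x : Fin 2 × B1 × ℝ × Bool) (y : 𝒴) :
    0 < Pr P (fun ω => (H ω, π1 ω, π2 ω, D ω) = x) →
      cPr P (fun ω => Y2 ω = y) (fun ω => (H ω, π1 ω, π2 ω, D ω) = x) = f x.1 y := by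
  obtain ⟨h, q1, q2, d⟩ := x
  simpa only [Prod.mk.injEq] using hci y h q1 q2 d

end Observer2

theorem observer2_update_transformation_general {Ω Ω' B1 𝒴 : Type*}
    [Fintype Ω] [Fintype Ω'] [Fintype 𝒴]
    (f : Fin 2 → 𝒴 → ℝ) (Tm : ℝ → 𝒴 → ℝ) (α β : ℝ)
    -- system 1
    (P : Ω → ℝ) (hPnn : ∀ ω, 0 ≤ P ω)
    (H : Ω → Fin 2) (π1 : Ω → B1) (π2 : Ω → ℝ) (D : Ω → Bool) (Y2 : Ω → 𝒴)
    (hci : ∀ (y : 𝒴) (h : Fin 2) (q1 : B1) (q2 : ℝ) (d : Bool),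
      0 < Pr P (fun ω => H ω = h ∧ π1 ω = q1 ∧ π2 ω = q2 ∧ D ω = d) →
      cPr P (fun ω => Y2 ω = y)
        (fun ω => H ω = h ∧ π1 ω = q1 ∧ π2 ω = q2 ∧ D ω = d) = f h y)
    (π2' : Ω → ℝ)
    (hπ2' : ∀ ω, π2' ω = if D ω = true then Tm (π2 ω) (Y2 ω) else π2 ω)
    (D' : Ω → Bool)
    (hD' : ∀ ω, D' ω = true ↔
      (D ω = true ∧ Tm (π2 ω) (Y2 ω) ∈ Set.Ioo α β))
    -- system 2
    (P' : Ω' → ℝ) (hP'nn : ∀ ω, 0 ≤ P' ω)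
    (H' : Ω' → Fin 2) (π1' : Ω' → B1) (π2x : Ω' → ℝ) (Dx : Ω' → Bool)
    (Y2' : Ω' → 𝒴)
    (hci' : ∀ (y : 𝒴) (h : Fin 2) (q1 : B1) (q2 : ℝ) (d : Bool),
      0 < Pr P' (fun ω => H' ω = h ∧ π1' ω = q1 ∧ π2x ω = q2 ∧ Dx ω = d) →
      cPr P' (fun ω => Y2' ω = y)
        (fun ω => H' ω = h ∧ π1' ω = q1 ∧ π2x ω = q2 ∧ Dx ω = d) = f h y)
    (π2x' : Ω' → ℝ)
    (hπ2x' : ∀ ω, π2x' ω = if Dx ω = true then Tm (π2x ω) (Y2' ω) else π2x ω)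
    (Dx' : Ω' → Bool)
    (hDx' : ∀ ω, Dx' ω = true ↔
      (Dx ω = true ∧ Tm (π2x ω) (Y2' ω) ∈ Set.Ioo α β))
    -- equal prior joint laws
    (hlaw : ∀ (h : Fin 2) (q1 : B1) (q2 : ℝ) (d : Bool),
      Pr P (fun ω => H ω = h ∧ π1 ω = q1 ∧ π2 ω = q2 ∧ D ω = d) =
        Pr P' (fun ω => H' ω = h ∧ π1' ω = q1 ∧ π2x ω = q2 ∧ Dx ω = d)) :
    -- equal updated joint laws
    ∀ (h : Fin 2) (q1 : B1) (q2 : ℝ) (d : Bool),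
      Pr P (fun ω => H ω = h ∧ π1 ω = q1 ∧ π2' ω = q2 ∧ D' ω = d) =
        Pr P' (fun ω => H' ω = h ∧ π1' ω = q1 ∧ π2x' ω = q2 ∧ Dx' ω = d) := by
  intro h q1 q2 d
  have hstate_law : ∀ x : Fin 2 × B1 × ℝ × Bool,
      Pr P (fun ω => (H ω, π1 ω, π2 ω, D ω) = x) =
        Pr P' (fun ω => (H' ω, π1' ω, π2x ω, Dx ω) = x) := by
    rintro ⟨h, q1, q2, d⟩
    simpa only [Prod.mk.injEq] using hlaw h q1 q2 d
  have hupdated := Pr_comp_eq_of_law_eq hPnn hP'nn (cPr_state_eq_of_cPr hci)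
    (cPr_state_eq_of_cPr hci') hstate_law fun x y => observer2Step Tm α β x y = (h, q1, q2, d)
  simpa only [observer2Step_state hπ2' hD', observer2Step_state hπ2x' hDx', Prod.mk.injEq]
    using hupdated

/-- Lemma 4(ii): the joint law of `(H, π¹, π²', D')` after
observer 2's update and stopping decision is determined by the joint law of
`(H, π¹, π², D)`, the thresholds `(α², β²)`, and the likelihoods `f`: any two
systems with the same prior joint law, likelihoods, belief-update map and
thresholds induce the same updated joint law. -/
theorem observer2_update_transformation {Ω Ω' B1 𝒴 : Type*}
    [Fintype Ω] [Fintype Ω'] [Fintype B1] [Fintype 𝒴]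
    (f : Fin 2 → 𝒴 → ℝ) (Tm : ℝ → 𝒴 → ℝ) (α β : ℝ)
    -- system 1
    (P : Ω → ℝ) (hPnn : ∀ ω, 0 ≤ P ω) (hPsum : ∑ ω, P ω = 1)
    (H : Ω → Fin 2) (π1 : Ω → B1) (π2 : Ω → ℝ) (D : Ω → Bool) (Y2 : Ω → 𝒴)
    (hci : ∀ (y : 𝒴) (h : Fin 2) (q1 : B1) (q2 : ℝ) (d : Bool),
      0 < Pr P (fun ω => H ω = h ∧ π1 ω = q1 ∧ π2 ω = q2 ∧ D ω = d) →
      cPr P (fun ω => Y2 ω = y)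
        (fun ω => H ω = h ∧ π1 ω = q1 ∧ π2 ω = q2 ∧ D ω = d) = f h y)
    (π2' : Ω → ℝ)
    (hπ2' : ∀ ω, π2' ω = if D ω = true then Tm (π2 ω) (Y2 ω) else π2 ω)
    (D' : Ω → Bool)
    (hD' : ∀ ω, D' ω = true ↔
      (D ω = true ∧ Tm (π2 ω) (Y2 ω) ∈ Set.Ioo α β))
    -- system 2
    (P' : Ω' → ℝ) (hP'nn : ∀ ω, 0 ≤ P' ω) (hP'sum : ∑ ω, P' ω = 1)
    (H' : Ω' → Fin 2) (π1' : Ω' → B1) (π2x : Ω' → ℝ) (Dx : Ω' → Bool)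
    (Y2' : Ω' → 𝒴)
    (hci' : ∀ (y : 𝒴) (h : Fin 2) (q1 : B1) (q2 : ℝ) (d : Bool),
      0 < Pr P' (fun ω => H' ω = h ∧ π1' ω = q1 ∧ π2x ω = q2 ∧ Dx ω = d) →
      cPr P' (fun ω => Y2' ω = y)
        (fun ω => H' ω = h ∧ π1' ω = q1 ∧ π2x ω = q2 ∧ Dx ω = d) = f h y)
    (π2x' : Ω' → ℝ)
    (hπ2x' : ∀ ω, π2x' ω = if Dx ω = true then Tm (π2x ω) (Y2' ω) else π2x ω)
    (Dx' : Ω' → Bool)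
    (hDx' : ∀ ω, Dx' ω = true ↔
      (Dx ω = true ∧ Tm (π2x ω) (Y2' ω) ∈ Set.Ioo α β))
    -- equal prior joint laws
    (hlaw : ∀ (h : Fin 2) (q1 : B1) (q2 : ℝ) (d : Bool),
      Pr P (fun ω => H ω = h ∧ π1 ω = q1 ∧ π2 ω = q2 ∧ D ω = d) =
        Pr P' (fun ω => H' ω = h ∧ π1' ω = q1 ∧ π2x ω = q2 ∧ Dx ω = d)) :
    -- equal updated joint laws
    ∀ (h : Fin 2) (q1 : B1) (q2 : ℝ) (d : Bool),
      Pr P (fun ω => H ω = h ∧ π1 ω = q1 ∧ π2' ω = q2 ∧ D' ω = d) =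
        Pr P' (fun ω => H' ω = h ∧ π1' ω = q1 ∧ π2x' ω = q2 ∧ Dx' ω = d) :=
  observer2_update_transformation_general f Tm α β P hPnn H π1 π2 D Y2 hci π2' hπ2' D' hD' P' hP'nn
    H' π1' π2x Dx Y2' hci' π2x' hπ2x' Dx' hDx' hlaw
end
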